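/- Let λ > 0 and b > 0. Suppose that for each integer M ≥ 1 the number ν_M > 0 satisfies ∫_{b²ν_M}^∞ (1/√(x·ν_M) − b/x) · M(1−e^{−λx})^{M−1} λ e^{−λx} dx = 1. Then ν_M → 0 as M → ∞. -/

import Mathlib

/-!
Suppose `ν_M ≥ ε` and split the power integral at `T = 4 / ε`. On `x ≤ T` the gain
`1/√(xν_M) − b/x` is at most `1/(bε)`, because `x ≥ b²ν_M`, while `p_M` puts mass at most
`(1 − e^{−λT})^M` there, which tends to `0`. On `x > T` the gain is at most `1/√(Tε) = 1/2`
and `p_M` has total mass `1`. So for large `M` the integral is `< 1`.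
-/

open MeasureTheory Filter Real Set Topology

noncomputable def maxExpCDF (lam : ℝ) (M : ℕ) (x : ℝ) : ℝ :=
  (1 - exp (-lam * x)) ^ M

noncomputable def maxExpPDF (lam : ℝ) (M : ℕ) (x : ℝ) : ℝ :=
  (M : ℝ) * (1 - exp (-lam * x)) ^ (M - 1) * (lam * exp (-lam * x))

noncomputable def waterFillingPower (b ν x : ℝ) : ℝ :=
  1 / √(x * ν) - b / x

section MaxExp

variable {lam : ℝ} {M : ℕ} {x : ℝ}

lemma one_sub_exp_neg_mul_nonneg (hlam : 0 ≤ lam) (hx : 0 ≤ x) : 0 ≤ 1 - exp (-lam * x) := by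
  have : exp (-lam * x) ≤ 1 := exp_le_one_iff.mpr (by nlinarith)
  linarith

lemma maxExpCDF_nonneg (hlam : 0 ≤ lam) (hx : 0 ≤ x) : 0 ≤ maxExpCDF lam M x :=
  pow_nonneg (one_sub_exp_neg_mul_nonneg hlam hx) M

lemma maxExpPDF_nonneg (hlam : 0 ≤ lam) (hx : 0 ≤ x) : 0 ≤ maxExpPDF lam M x := by
  have := one_sub_exp_neg_mul_nonneg hlam hx
  unfold maxExpPDF
  positivity

lemma hasDerivAt_maxExpCDF (lam : ℝ) (M : ℕ) (x : ℝ) :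
    HasDerivAt (maxExpCDF lam M) (maxExpPDF lam M x) x := by
  have h := (((hasDerivAt_id x).const_mul (-lam)).exp.const_sub 1).pow M
  refine h.congr_deriv ?_
  simp only [maxExpPDF, id]
  ring

lemma tendsto_maxExpCDF_atTop (hlam : 0 < lam) (M : ℕ) :
    Tendsto (maxExpCDF lam M) atTop (𝓝 1) := by
  unfold maxExpCDF
  have h : Tendsto (fun x : ℝ => exp (-lam * x)) atTop (𝓝 0) := by
    refine (tendsto_exp_neg_atTop_nhds_zero.comp (tendsto_id.const_mul_atTop hlam)).congr
      fun x => ?_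
    simp [neg_mul]
  simpa using (tendsto_const_nhds (x := (1 : ℝ)).sub h).pow M

lemma tendsto_maxExpCDF_nat_atTop (hlam : 0 ≤ lam) (hx : 0 ≤ x) :
    Tendsto (fun M : ℕ => maxExpCDF lam M x) atTop (𝓝 0) :=
  tendsto_pow_atTop_nhds_zero_of_lt_one (one_sub_exp_neg_mul_nonneg hlam hx)
    (sub_lt_self 1 (exp_pos _))

variable {a T : ℝ}

lemma integrableOn_maxExpPDF_Ioi (hlam : 0 < lam) (ha : 0 ≤ a) :
    IntegrableOn (maxExpPDF lam M) (Ioi a) :=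
  integrableOn_Ioi_deriv_of_nonneg' (fun x _ => hasDerivAt_maxExpCDF lam M x)
    (fun _ hx => maxExpPDF_nonneg hlam.le (ha.trans hx.out.le)) (tendsto_maxExpCDF_atTop hlam M)

lemma setIntegral_maxExpPDF_Ioi (hlam : 0 < lam) (ha : 0 ≤ a) :
    ∫ x in Ioi a, maxExpPDF lam M x = 1 - maxExpCDF lam M a :=
  integral_Ioi_of_hasDerivAt_of_nonneg' (fun x _ => hasDerivAt_maxExpCDF lam M x)
    (fun _ hx => maxExpPDF_nonneg hlam.le (ha.trans hx.out.le)) (tendsto_maxExpCDF_atTop hlam M)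

lemma setIntegral_maxExpPDF_Ioc (h : a ≤ T) :
    ∫ x in Ioc a T, maxExpPDF lam M x = maxExpCDF lam M T - maxExpCDF lam M a := by
  have hcont : Continuous (maxExpPDF lam M) := by unfold maxExpPDF; fun_prop
  rw [← intervalIntegral.integral_of_le h]
  exact intervalIntegral.integral_eq_sub_of_hasDerivAt (fun x _ => hasDerivAt_maxExpCDF lam M x)
    (hcont.intervalIntegrable a T)

end MaxExp

lemma waterFillingPower_le {b ν x : ℝ} (hb : 0 ≤ b) (hx : 0 ≤ x) :
    waterFillingPower b ν x ≤ 1 / √(x * ν) :=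
  sub_le_self _ (div_nonneg hb hx)

lemma one_div_sqrt_mul_le_of_le {u v x y : ℝ} (hu : 0 < u) (hv : 0 < v) (hux : u ≤ x)
    (hvy : v ≤ y) : 1 / √(x * y) ≤ 1 / √(u * v) :=
  one_div_le_one_div_of_le (by positivity)
    (sqrt_le_sqrt (mul_le_mul hux hvy hv.le (hu.le.trans hux)))

lemma setIntegral_waterFillingPower_mul_maxExpPDF_le_mul {lam b ν c : ℝ} {M : ℕ} {s : Set ℝ}
    (hlam : 0 < lam) (hb : 0 ≤ b) (hs : s ⊆ Ioi 0) (hms : MeasurableSet s)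
    (hint : IntegrableOn (fun x => waterFillingPower b ν x * maxExpPDF lam M x) s)
    (hc : ∀ x ∈ s, 1 / √(x * ν) ≤ c) :
    ∫ x in s, waterFillingPower b ν x * maxExpPDF lam M x ≤ c * ∫ x in s, maxExpPDF lam M x := by
  rw [← integral_const_mul]
  refine setIntegral_mono_on hint
    ((integrableOn_maxExpPDF_Ioi hlam le_rfl).mono_set hs |>.const_mul c) hms fun x hx => ?_
  exact mul_le_mul_of_nonneg_right ((waterFillingPower_le hb (hs hx).out.le).trans (hc x hx))
    (maxExpPDF_nonneg hlam.le (hs hx).out.le)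

lemma setIntegral_waterFillingPower_mul_maxExpPDF_le {lam b ν ε T : ℝ} {M : ℕ} (hlam : 0 < lam)
    (hb : 0 < b) (hε : 0 < ε) (hεν : ε ≤ ν) (hT : 0 < T)
    (hint : IntegrableOn (fun x => waterFillingPower b ν x * maxExpPDF lam M x)
      (Ioi (b ^ 2 * ν))) :
    ∫ x in Ioi (b ^ 2 * ν), waterFillingPower b ν x * maxExpPDF lam M x ≤
      maxExpCDF lam M T / (b * ε) + 1 / √(T * ε) := by
  set a := b ^ 2 * ν
  have ha : Ioi a ⊆ Ioi 0 := Ioi_subset_Ioi (by have := hε.trans_le hεν; positivity)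
  have hp : IntegrableOn (maxExpPDF lam M) (Ioi 0) := integrableOn_maxExpPDF_Ioi hlam le_rfl
  have hpos : ∀ x ∈ Ioi (0 : ℝ), 0 ≤ maxExpPDF lam M x := fun x hx =>
    maxExpPDF_nonneg hlam.le hx.out.le
  have hF0 : 0 ≤ maxExpCDF lam M 0 := maxExpCDF_nonneg hlam.le le_rfl
  rw [← integral_inter_add_sdiff measurableSet_Iic hint]
  gcongr ?_ + ?_
  · have hbε : 1 / √(b ^ 2 * ε * ε) = 1 / (b * ε) := by
      rw [show b ^ 2 * ε * ε = (b * ε) * (b * ε) by ring, sqrt_mul_self (by positivity)]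
    calc _ ≤ 1 / (b * ε) * ∫ x in Ioi a ∩ Iic T, maxExpPDF lam M x :=
          setIntegral_waterFillingPower_mul_maxExpPDF_le_mul hlam hb.le
            (inter_subset_left.trans ha) (measurableSet_Ioi.inter measurableSet_Iic)
            (hint.mono_set inter_subset_left) fun x hx =>
            hbε ▸ one_div_sqrt_mul_le_of_le (by positivity) hε
              ((mul_le_mul_of_nonneg_left hεν (by positivity)).trans hx.1.out.le) hεν
      _ ≤ 1 / (b * ε) * ∫ x in Ioc 0 T, maxExpPDF lam M x := by
          gcongr
          · filter_upwards [ae_restrict_mem measurableSet_Ioc] with x hx using hpos x hx.1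
          · exact hp.mono_set Ioc_subset_Ioi_self
          · exact fun x hx => ⟨ha hx.1, hx.2⟩
      _ ≤ maxExpCDF lam M T / (b * ε) := by
          rw [setIntegral_maxExpPDF_Ioc hT.le, one_div_mul_eq_div]
          gcongr
          linarith
  · calc _ ≤ 1 / √(T * ε) * ∫ x in Ioi a \ Iic T, maxExpPDF lam M x :=
          setIntegral_waterFillingPower_mul_maxExpPDF_le_mul hlam hb.le
            (sdiff_subset.trans ha) (measurableSet_Ioi.diff measurableSet_Iic)
            (hint.mono_set sdiff_subset) fun x hx =>
            one_div_sqrt_mul_le_of_le hT hε (not_le.1 hx.2).le hεν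
      _ ≤ 1 / √(T * ε) * ∫ x in Ioi 0, maxExpPDF lam M x := by
          gcongr
          · filter_upwards [ae_restrict_mem measurableSet_Ioi] with x hx using hpos x hx
          · exact sdiff_subset.trans ha
      _ ≤ 1 / √(T * ε) := by
          rw [setIntegral_maxExpPDF_Ioi hlam le_rfl]
          exact mul_le_of_le_one_right (by positivity) (by linarith)

/-- For the multi-sensor diversity scheme under optimal water-filling power
allocation with unit average power, the Lagrange multiplier `ν_M` defined by
`∫_{b²ν_M}^∞ (1/√(xν_M) − b/x) M(1-e^{-λx})^{M-1} λe^{-λx} dx = 1`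
tends to `0` as `M → ∞`. -/
theorem diversity_lagrange_tendsto_zero (lam b : ℝ) (hlam : 0 < lam) (hb : 0 < b)
    (ν : ℕ → ℝ) (hν : ∀ M : ℕ, 1 ≤ M → 0 < ν M)
    (hpower : ∀ M : ℕ, 1 ≤ M →
      (∫ x in Set.Ioi (b ^ 2 * ν M),
          (1 / Real.sqrt (x * ν M) - b / x) *
            ((M : ℝ) * (1 - Real.exp (-lam * x)) ^ (M - 1)
              * (lam * Real.exp (-lam * x)))) = 1) :
    Tendsto ν atTop (nhds 0) := by
  refine tendsto_order.2 ⟨fun c hc => ?_, fun ε hε => ?_⟩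
  · filter_upwards [eventually_ge_atTop 1] with M hM using hc.trans (hν M hM)
  have hsmall : ∀ᶠ M in atTop, maxExpCDF lam M (4 / ε) / (b * ε) < 1 / 2 := by
    refine ((tendsto_maxExpCDF_nat_atTop hlam.le (by positivity)).div_const (b * ε)).eventually
      (gt_mem_nhds ?_)
    norm_num
  filter_upwards [eventually_ge_atTop 1, hsmall] with M hM hMsmall
  by_contra! hεν
  have hint : IntegrableOn (fun x => waterFillingPower b (ν M) x * maxExpPDF lam M x)
      (Ioi (b ^ 2 * ν M)) := integrable_of_integral_eq_one (hpower M hM)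
  have hle := setIntegral_waterFillingPower_mul_maxExpPDF_le hlam hb hε hεν
    (T := 4 / ε) (by positivity) hint
  have hsqrt : √(4 / ε * ε) = 2 := by
    rw [div_mul_cancel₀ _ hε.ne', show (4 : ℝ) = 2 ^ 2 by norm_num, sqrt_sq zero_le_two]
  rw [hsqrt] at hle
  linarith [(hpower M hM).ge.trans hle]
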